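/- arXiv:2510.13523 — 3 statements merged into one kernel-verified Lean document; each statement's English description precedes it below -/
import Mathlib

section
/- Let ε ∈ {0,1} and let N be a natural number, with N even if ε = 1. Then for every partition d of N, the set {μ ∈ P_ε(N) : μ ⪯ d} is nonempty and possesses a greatest element with respect to the dominance order; that is, there exists a unique partition d_X ∈ P_ε(N) with d_X ⪯ d such that every μ ∈ P_ε(N) with μ ⪯ d satisfies μ ⪯ d_X. -/
/-- A partition of `N`: a non-increasing list of positive naturals summing to `N`. -/
def IsPartition (N : ℕ) (l : List ℕ) : Prop :=
  l.Pairwise (· ≥ ·) ∧ (∀ p ∈ l, 0 < p) ∧ l.sum = N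

/-- Dominance order on partitions: `Dom p q` means `p ⪯ q`,
i.e. every initial partial sum of `p` is at most that of `q`. -/
def Dom (p q : List ℕ) : Prop :=
  ∀ j : ℕ, (p.take j).sum ≤ (q.take j).sum

/-- The height `h_d(s) = #{j : d_j ≥ s}`. -/
def height (l : List ℕ) (s : ℕ) : ℕ :=
  (l.filter (fun p => decide (s ≤ p))).length

/-- Membership in `P_ε(N)`: every part congruent to `ε` mod 2 occurs with even multiplicity. -/
def PEps (e : ℕ) (l : List ℕ) : Prop :=
  ∀ s ∈ l, s % 2 = e % 2 → Even (l.count s)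

/-- Membership in `P_{ε,ε'}(N)`: lies in `P_ε` and `h_d(s) ≡ ε'  (mod 2)` for every integer
`s ≥ 0` with `s ≡ ε (mod 2)` which is either `0` or a part of `d`. -/
def PEpsEps (e e' : ℕ) (l : List ℕ) : Prop :=
  PEps e l ∧
    ∀ s : ℕ, s % 2 = e % 2 → (s = 0 ∨ s ∈ l) → height l s % 2 = e' % 2

/-- `d⁺ = [d₁ + 1, d₂, …, d_k]`. -/
def dplus : List ℕ → List ℕ
  | [] => []
  | a :: rest => (a + 1) :: rest

/-- `d⁻ = [d₁, …, d_{k−1}, d_k − 1]`, the last entry removed if `d_k = 1`. -/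
def dminus (l : List ℕ) : List ℕ :=
  (l.dropLast ++ [l.getLastD 0 - 1]).filter (fun p => decide (0 < p))

/-- `IsCollapse e N l c` says that `c` is the collapse of `l` into `P_e`: the greatest
element, in the dominance order, of the set of partitions of `N` lying in `P_e` and
dominated by `l`. -/
def IsCollapse (e N : ℕ) (l c : List ℕ) : Prop :=
  IsPartition N c ∧ PEps e c ∧ Dom c l ∧
    ∀ m : List ℕ, IsPartition N m → PEps e m → Dom m l → Dom m c

/-
Write `c_p m = ∑ᵢ min pᵢ m` for the column sums of a partition `p` of `N`. Conjugation turns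
dominance into the reverse pointwise order, `p ⪯ q ↔ c_q ≤ c_p`, and the functions `c_p` are
exactly those that rise from `0` to `N` (reached by `m = N`) with non-increasing increments.
Since `c_p (m + 2) ≡ c_p m + (multiplicity of m + 1)` mod 2, membership in `P_ε` says that
`c_p m ≡ N` mod 2 for every `m ≢ ε`. Both descriptions survive a pointwise minimum, so the
partitions in `P_ε` dominated by `d` form a directed set for `⪯`; a `⪯`-maximal member, which
exists because partial sums are bounded, is then its greatest element. The set is nonempty since
`[1, …, 1]` is dominated by every partition and lies in `P_ε` when `N` is even.
-/

def colSum (l : List ℕ) (m : ℕ) : ℕ := (l.map (min · m)).sum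

section ColSum

variable (l : List ℕ)

@[simp]
lemma colSum_nil (m : ℕ) : colSum [] m = 0 := rfl

@[simp]
lemma colSum_cons (a m : ℕ) : colSum (a :: l) m = min a m + colSum l m := by
  simp [colSum]

lemma colSum_append (l' : List ℕ) (m : ℕ) : colSum (l ++ l') m = colSum l m + colSum l' m := by
  simp [colSum]

@[simp]
lemma colSum_zero : colSum l 0 = 0 := by
  simp [colSum]

lemma height_cons (a s : ℕ) : height (a :: l) s = (if s ≤ a then 1 else 0) + height l s := by
  by_cases h : s ≤ a <;> simp [height, h]; omega

lemma colSum_succ (m : ℕ) : colSum l (m + 1) = colSum l m + height l (m + 1) := by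
  induction l with
  | nil => rfl
  | cons a t ih =>
    rw [colSum_cons, colSum_cons, height_cons, ih]
    split_ifs <;> omega

lemma height_eq_count_add (s : ℕ) : height l s = l.count s + height l (s + 1) := by
  induction l with
  | nil => rfl
  | cons a t ih =>
    rw [height_cons, height_cons, List.count_cons, ih]
    split_ifs <;> simp_all <;> omega

lemma colSum_add_two (m : ℕ) :
    colSum l (m + 2) = colSum l m + l.count (m + 1) + 2 * height l (m + 2) := by
  rw [show m + 2 = m + 1 + 1 from rfl]
  have := colSum_succ l (m + 1)
  have := colSum_succ l m
  have := height_eq_count_add l (m + 1)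
  omega

lemma height_antitone : Antitone (height l) := fun _ _ h =>
  (List.monotone_filter_right l fun x hx => by simp only [decide_eq_true_eq] at *; omega).length_le

lemma colSum_mono : Monotone (colSum l) :=
  monotone_nat_of_le_succ fun m => by rw [colSum_succ]; omega

lemma colSum_le_sum (m : ℕ) : colSum l m ≤ l.sum := by
  simpa [colSum] using List.sum_le_sum (l := l) (f := (min · m)) fun x _ => min_le_left x m

lemma colSum_le_length_mul (m : ℕ) : colSum l m ≤ l.length * m := by
  simpa [colSum] using List.sum_le_sum (l := l) (f := (min · m)) fun x _ => min_le_right x m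

lemma colSum_eq_sum {m : ℕ} (h : ∀ x ∈ l, x ≤ m) : colSum l m = l.sum := by
  simp [colSum, List.map_congr_left fun x hx => min_eq_left (h x hx)]

end ColSum

lemma colSum_eq_of_isPartition {N : ℕ} {p : List ℕ} (hp : IsPartition N p) {m : ℕ} (hm : N ≤ m) :
    colSum p m = N := by
  refine (colSum_eq_sum p fun x hx => ?_).trans hp.2.2
  have := List.le_sum_of_mem hx
  have := hp.2.2
  omega

-- The first `k` rows and the first `m` columns of the Young diagram share at most `k * m` cells,
-- with equality when `(k, m)` is a corner of the diagram.
lemma take_sum_add_colSum_le (p : List ℕ) (k m : ℕ) :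
    (p.take k).sum + colSum p m ≤ k * m + p.sum := by
  have hsplit := colSum_append (p.take k) (p.drop k) m
  rw [List.take_append_drop] at hsplit
  have := colSum_le_length_mul (p.take k) m
  have := colSum_le_sum (p.drop k) m
  have := Nat.mul_le_mul_right m (List.length_take_le k p)
  have := List.sum_take_add_sum_drop p k
  omega

section Sorted

variable {p : List ℕ} (hp : p.Pairwise (· ≥ ·))
include hp

lemma exists_take_sum_add_colSum_eq (m : ℕ) :
    ∃ k, (p.take k).sum + colSum p m = k * m + p.sum := by
  induction p with
  | nil => exact ⟨0, by simp⟩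
  | cons a t ih =>
    obtain ⟨hat, ht⟩ := List.pairwise_cons.1 hp
    by_cases ham : a ≤ m
    · refine ⟨0, ?_⟩
      rw [colSum_eq_sum _ fun x hx => ?_]
      · simp
      · rcases List.mem_cons.1 hx with rfl | hx
        exacts [ham, (hat x hx).trans ham]
    · obtain ⟨k, hk⟩ := ih ht
      refine ⟨k + 1, ?_⟩
      simp only [List.take_succ_cons, List.sum_cons, colSum_cons, min_eq_right (le_of_not_ge ham)]
      rw [Nat.succ_mul]
      omega

lemma exists_colSum_add_take_sum_eq (k : ℕ) :
    ∃ m, colSum p m + (p.take k).sum = k * m + p.sum := by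
  suffices ∃ m, (m = 0 ∨ m ∈ p) ∧ colSum p m + (p.take k).sum = k * m + p.sum from
    this.imp fun _ => And.right
  induction p generalizing k with
  | nil => exact ⟨0, Or.inl rfl, by simp⟩
  | cons a t ih =>
    obtain ⟨hat, ht⟩ := List.pairwise_cons.1 hp
    cases k with
    | zero =>
      refine ⟨a, Or.inr List.mem_cons_self, ?_⟩
      rw [colSum_eq_sum _ fun x hx => ?_]
      · simp
      · rcases List.mem_cons.1 hx with rfl | hx
        exacts [le_rfl, hat x hx]
    | succ k =>
      obtain ⟨m, hm, hk⟩ := ih ht k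
      have hma : m ≤ a := hm.elim (fun h => h ▸ Nat.zero_le a) (hat m)
      refine ⟨m, hm.imp_right (List.mem_cons_of_mem a), ?_⟩
      simp only [List.take_succ_cons, List.sum_cons, colSum_cons, min_eq_right hma]
      rw [Nat.succ_mul]
      omega

end Sorted

lemma dom_iff_colSum_le {N : ℕ} {p q : List ℕ} (hp : IsPartition N p) (hq : IsPartition N q) :
    Dom p q ↔ ∀ m, colSum q m ≤ colSum p m := by
  have := hp.2.2
  have := hq.2.2
  constructor
  · intro h m
    obtain ⟨k, hk⟩ := exists_take_sum_add_colSum_eq hp.1 m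
    have := take_sum_add_colSum_le q k m
    have := h k
    omega
  · intro h k
    obtain ⟨m, hm⟩ := exists_colSum_add_take_sum_eq hq.1 k
    have := take_sum_add_colSum_le p k m
    have := h m
    omega

lemma pEps_iff_colSum_mod_two {e N : ℕ} {p : List ℕ} (hp : IsPartition N p) :
    PEps e p ↔ ∀ m, m % 2 ≠ e % 2 → colSum p m % 2 = N % 2 := by
  constructor
  · intro hpe m hm
    have hstep : ∀ t, colSum p (m + 2 * (t + 1)) % 2 = colSum p (m + 2 * t) % 2 := fun t => by
      have heven : Even (p.count (m + 2 * t + 1)) := by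
        by_cases hmem : m + 2 * t + 1 ∈ p
        · exact hpe _ hmem (by omega)
        · rw [List.count_eq_zero.2 hmem]; exact Even.zero
      obtain ⟨r, hr⟩ := heven
      have := colSum_add_two p (m + 2 * t)
      rw [show m + 2 * (t + 1) = m + 2 * t + 2 by ring]
      omega
    have hperiodic : ∀ t, colSum p (m + 2 * t) % 2 = colSum p m % 2 := fun t => by
      induction t with
      | zero => rfl
      | succ t ih => rw [hstep, ih]
    rw [← hperiodic N, colSum_eq_of_isPartition hp (by omega)]
  · intro h s hs hse
    obtain ⟨m, rfl⟩ : ∃ m, s = m + 1 := ⟨s - 1, by have := hp.2.1 s hs; omega⟩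
    have := h m (by omega)
    have := h (m + 2) (by omega)
    have := colSum_add_two p m
    rw [Nat.even_iff]
    omega

/-- The partition whose `j`-th column has length `g (j + 1) - g j`: its `i`-th part is the number
of columns longer than `i`. -/
def ofColSum (N : ℕ) (g : ℕ → ℕ) : List ℕ :=
  ((List.range N).map fun i => ((Finset.range N).filter fun j => i < g (j + 1) - g j).card).filter
    (0 < ·)

lemma height_filter_pos (l : List ℕ) (s : ℕ) :
    height (l.filter (0 < ·)) (s + 1) = height l (s + 1) := by
  simp only [height, List.filter_filter]
  congr 1
  exact List.filter_congr fun x _ => by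
    by_cases h : s + 1 ≤ x <;> simp [h]; omega

lemma height_map_range (c : ℕ → ℕ) (n s : ℕ) :
    height ((List.range n).map c) s = ((Finset.range n).filter fun i => s ≤ c i).card := by
  simp [height, List.filter_map, Finset.filter, Finset.range, Multiset.range, Function.comp_def]

lemma succ_le_card_filter_lt_iff {f : ℕ → ℕ} (hf : Antitone f) {N i j : ℕ} (hj : j < N) :
    j + 1 ≤ ((Finset.range N).filter fun k => i < f k).card ↔ i < f j := by
  constructor
  · intro hcard
    by_contra! hij
    have hsub : (Finset.range N).filter (fun k => i < f k) ⊆ Finset.range j := fun k hk => by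
      simp only [Finset.mem_filter, Finset.mem_range] at hk ⊢
      by_contra! hjk
      have := hf hjk
      omega
    have := (Finset.card_le_card hsub).trans_eq (Finset.card_range j)
    omega
  · intro hij
    have hsub : Finset.range (j + 1) ⊆ (Finset.range N).filter fun k => i < f k := fun k hk => by
      simp only [Finset.mem_filter, Finset.mem_range] at hk ⊢
      have := hf (Nat.le_of_lt_succ hk)
      omega
    simpa using Finset.card_le_card hsub

section OfColSum

variable {N : ℕ} {g : ℕ → ℕ}

lemma le_of_mem_ofColSum {x : ℕ} (hx : x ∈ ofColSum N g) : x ≤ N := by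
  obtain ⟨i, -, rfl⟩ := List.mem_map.1 (List.mem_filter.1 hx).1
  exact (Finset.card_filter_le _ _).trans (Finset.card_range N).le

lemma pairwise_ofColSum : (ofColSum N g).Pairwise (· ≥ ·) := by
  refine ((List.pairwise_lt_range (n := N)).map _ fun {i i'} hii' => ?_).filter _
  exact Finset.card_le_card fun j => by
    simp only [Finset.mem_filter]
    exact fun h => ⟨h.1, by omega⟩

lemma height_ofColSum (hconc : Antitone fun j => g (j + 1) - g j) (hle : ∀ j, g j ≤ N)
    {j : ℕ} (hj : j < N) : height (ofColSum N g) (j + 1) = g (j + 1) - g j := by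
  rw [ofColSum, height_filter_pos, height_map_range,
    Finset.filter_congr fun i _ => succ_le_card_filter_lt_iff hconc hj, Finset.range_eq_Ico,
    Finset.Ico_filter_lt, Nat.card_Ico]
  have := hle (j + 1)
  omega

variable (h0 : g 0 = 0) (hmono : Monotone g) (hconc : Antitone fun j => g (j + 1) - g j)
  (htop : ∀ j, N ≤ j → g j = N)
include h0 hmono hconc htop

lemma colSum_ofColSum (m : ℕ) : colSum (ofColSum N g) m = g m := by
  have hle : ∀ j, g j ≤ N := fun j => (hmono (le_max_left j N)).trans_eq (htop _ (le_max_right j N))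
  have hlow : ∀ m ≤ N, colSum (ofColSum N g) m = g m := by
    intro m hm
    induction m with
    | zero => rw [colSum_zero, h0]
    | succ m ih =>
      rw [colSum_succ, ih (by omega), height_ofColSum hconc hle (by omega)]
      have := hmono (Nat.le_add_right m 1)
      omega
  rcases le_total m N with hm | hm
  · exact hlow m hm
  · calc colSum (ofColSum N g) m = colSum (ofColSum N g) N := by
          rw [colSum_eq_sum _ fun x hx => (le_of_mem_ofColSum hx).trans hm,
            colSum_eq_sum _ fun x hx => le_of_mem_ofColSum hx]
      _ = g m := by rw [hlow N le_rfl, htop N le_rfl, htop m hm]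

lemma isPartition_ofColSum : IsPartition N (ofColSum N g) := by
  refine ⟨pairwise_ofColSum, fun x hx => by simpa using (List.mem_filter.1 hx).2, ?_⟩
  rw [← colSum_eq_sum _ fun x hx => le_of_mem_ofColSum hx, colSum_ofColSum h0 hmono hconc htop,
    htop N le_rfl]

end OfColSum

lemma antitone_sub_min {f g : ℕ → ℕ} (hf : Monotone f) (hg : Monotone g)
    (hf' : Antitone fun j => f (j + 1) - f j) (hg' : Antitone fun j => g (j + 1) - g j) :
    Antitone fun j => min (f (j + 1)) (g (j + 1)) - min (f j) (g j) := by
  refine antitone_nat_of_succ_le fun j => ?_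
  have := hf (Nat.le_add_right j 1)
  have := hf (Nat.le_add_right (j + 1) 1)
  have := hg (Nat.le_add_right j 1)
  have := hg (Nat.le_add_right (j + 1) 1)
  have := hf' (Nat.le_add_right j 1)
  have := hg' (Nat.le_add_right j 1)
  simp only at *
  omega

lemma antitone_colSum_sub (l : List ℕ) : Antitone fun j => colSum l (j + 1) - colSum l j :=
  antitone_nat_of_succ_le fun j => by
    simp only [colSum_succ, Nat.add_sub_cancel_left]
    exact height_antitone l (Nat.le_add_right _ 1)

lemma exists_colSum_eq_min {N : ℕ} {p q : List ℕ} (hp : IsPartition N p) (hq : IsPartition N q) :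
    ∃ r, IsPartition N r ∧ ∀ m, colSum r m = min (colSum p m) (colSum q m) := by
  have h0 : min (colSum p 0) (colSum q 0) = 0 := by simp
  have hmono : Monotone fun m => min (colSum p m) (colSum q m) :=
    (colSum_mono p).min (colSum_mono q)
  have hconc := antitone_sub_min (colSum_mono p) (colSum_mono q) (antitone_colSum_sub p)
    (antitone_colSum_sub q)
  have htop : ∀ m, N ≤ m → min (colSum p m) (colSum q m) = N := fun m hm => by
    rw [colSum_eq_of_isPartition hp hm, colSum_eq_of_isPartition hq hm, min_self]
  exact ⟨_, isPartition_ofColSum h0 hmono hconc htop, colSum_ofColSum h0 hmono hconc htop⟩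

lemma eq_of_take_sum_eq : ∀ {p q : List ℕ}, (∀ x ∈ p, 0 < x) → (∀ x ∈ q, 0 < x) →
    (∀ j, (p.take j).sum = (q.take j).sum) → p = q
  | [], [], _, _, _ => rfl
  | [], b :: _, _, hq, h => by
    have := hq b List.mem_cons_self
    simpa [this.ne] using h 1
  | a :: _, [], hp, _, h => by
    have := hp a List.mem_cons_self
    simpa [this.ne'] using h 1
  | a :: s, b :: t, hp, hq, h => by
    obtain rfl : a = b := by simpa using h 1
    rw [eq_of_take_sum_eq (fun x hx => hp x (List.mem_cons_of_mem a hx))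
      (fun x hx => hq x (List.mem_cons_of_mem a hx)) fun j => by simpa using h (j + 1)]

lemma Dom.antisymm {p q : List ℕ} (hp : ∀ x ∈ p, 0 < x) (hq : ∀ x ∈ q, 0 < x) (hpq : Dom p q)
    (hqp : Dom q p) : p = q :=
  eq_of_take_sum_eq hp hq fun j => (hpq j).antisymm (hqp j)

def domPotential (N : ℕ) (l : List ℕ) : ℕ := ∑ j ∈ Finset.range (N + 1), (l.take j).sum

lemma domPotential_le (N : ℕ) {l : List ℕ} (hl : l.sum = N) : domPotential N l ≤ (N + 1) * N := by
  simpa [domPotential] using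
    Finset.sum_le_card_nsmul (Finset.range (N + 1)) (fun j => (l.take j).sum) N
    fun j _ => hl ▸ (List.take_sublist j l).sum_le_sum fun _ _ => Nat.zero_le _

lemma Dom.eq_of_domPotential_le {N : ℕ} {p q : List ℕ} (hp : IsPartition N p)
    (hq : IsPartition N q) (hpq : Dom p q) (hqp : domPotential N q ≤ domPotential N p) : p = q := by
  have hlow := (Finset.sum_eq_sum_iff_of_le fun j _ => hpq j).1
    (hqp.antisymm' (Finset.sum_le_sum fun j _ => hpq j))
  refine eq_of_take_sum_eq hp.2.1 hq.2.1 fun j => ?_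
  rcases le_or_gt j N with hj | hj
  · exact hlow j (Finset.mem_range.2 (Nat.lt_succ_of_le hj))
  · have hlen : ∀ {l}, IsPartition N l → l.length ≤ j := fun hl =>
      ((List.length_le_sum_of_one_le _ hl.2.1).trans_eq hl.2.2).trans hj.le
    rw [List.take_of_length_le (hlen hp), List.take_of_length_le (hlen hq), hp.2.2, hq.2.2]

lemma exists_greatest_of_directed {N : ℕ} (S : Set (List ℕ)) (hS : ∀ l ∈ S, IsPartition N l)
    (hne : S.Nonempty) (hdir : ∀ p ∈ S, ∀ q ∈ S, ∃ r ∈ S, Dom p r ∧ Dom q r) :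
    ∃ c ∈ S, ∀ l ∈ S, Dom l c := by
  have hbdd : BddAbove (domPotential N '' S) :=
    ⟨(N + 1) * N, fun _ ⟨l, hl, hpot⟩ => hpot ▸ domPotential_le N (hS l hl).2.2⟩
  obtain ⟨c, hc, hcmax⟩ := Nat.sSup_mem (hne.image _) hbdd
  refine ⟨c, hc, fun l hl => ?_⟩
  obtain ⟨r, hr, hlr, hcr⟩ := hdir l hl c hc
  have hrc : domPotential N r ≤ domPotential N c := hcmax ▸ le_csSup hbdd ⟨r, hr, rfl⟩
  rwa [hcr.eq_of_domPotential_le (hS c hc) (hS r hr) hrc]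

lemma exists_pEps_dom_upper_bound {e N : ℕ} {d p q : List ℕ} (hd : IsPartition N d)
    (hp : IsPartition N p ∧ PEps e p ∧ Dom p d) (hq : IsPartition N q ∧ PEps e q ∧ Dom q d) :
    ∃ r, (IsPartition N r ∧ PEps e r ∧ Dom r d) ∧ Dom p r ∧ Dom q r := by
  obtain ⟨hp, hpe, hpd⟩ := hp
  obtain ⟨hq, hqe, hqd⟩ := hq
  obtain ⟨r, hr, hcol⟩ := exists_colSum_eq_min hp hq
  rw [pEps_iff_colSum_mod_two hp] at hpe
  rw [pEps_iff_colSum_mod_two hq] at hqe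
  rw [dom_iff_colSum_le hp hd] at hpd
  rw [dom_iff_colSum_le hq hd] at hqd
  refine ⟨r, ⟨hr, ?_, ?_⟩, ?_, ?_⟩
  · exact (pEps_iff_colSum_mod_two hr).2 fun m hm => by
      rw [hcol]; have := hpe m hm; have := hqe m hm; omega
  · exact (dom_iff_colSum_le hr hd).2 fun m => by rw [hcol]; exact le_min (hpd m) (hqd m)
  · exact (dom_iff_colSum_le hp hr).2 fun m => by rw [hcol]; exact min_le_left _ _
  · exact (dom_iff_colSum_le hq hr).2 fun m => by rw [hcol]; exact min_le_right _ _

lemma isPartition_replicate_one (N : ℕ) : IsPartition N (List.replicate N 1) :=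
  ⟨List.pairwise_replicate.2 (Or.inr le_rfl),
    fun _ hx => (List.eq_of_mem_replicate hx).symm ▸ one_pos, by simp⟩

lemma pEps_replicate_one {e N : ℕ} (he : e = 0 ∨ e = 1) (hN : e = 1 → Even N) :
    PEps e (List.replicate N 1) := by
  intro s hs hse
  obtain rfl := List.eq_of_mem_replicate hs
  rw [List.count_replicate_self]
  exact hN (by omega)

lemma dom_replicate_one {N : ℕ} {d : List ℕ} (hd : IsPartition N d) :
    Dom (List.replicate N 1) d := by
  intro j
  rw [List.take_replicate, List.sum_replicate, smul_eq_mul, mul_one]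
  rcases le_total j d.length with hj | hj
  · have := List.length_le_sum_of_one_le (d.take j) fun x hx => hd.2.1 x (List.mem_of_mem_take hx)
    rw [List.length_take_of_le hj] at this
    omega
  · rw [List.take_of_length_le hj, hd.2.2]
    omega

/-- For `e ∈ {0,1}` and `N` a natural number, even if `e = 1`: for every partition `d` of `N`,
the set `{μ ∈ P_e(N) : μ ⪯ d}` is nonempty and possesses a (unique) greatest element with
respect to the dominance order. -/
theorem collapse_exists_unique (e : ℕ) (he : e = 0 ∨ e = 1) (N : ℕ) (hN : e = 1 → Even N)
    (d : List ℕ) (hd : IsPartition N d) :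
    (∃ c : List ℕ, IsPartition N c ∧ PEps e c ∧ Dom c d) ∧
      (∃! c : List ℕ, IsCollapse e N d c) := by
  have hbot : IsPartition N (List.replicate N 1) ∧ PEps e (List.replicate N 1) ∧
      Dom (List.replicate N 1) d :=
    ⟨isPartition_replicate_one N, pEps_replicate_one he hN, dom_replicate_one hd⟩
  obtain ⟨c, hc, hgreatest⟩ := exists_greatest_of_directed
    {l | IsPartition N l ∧ PEps e l ∧ Dom l d} (fun _ hl => hl.1) ⟨_, hbot⟩
    fun p hp q hq => exists_pEps_dom_upper_bound hd hp hq
  refine ⟨⟨_, hbot⟩, c, ⟨hc.1, hc.2.1, hc.2.2, fun l h1 h2 h3 => hgreatest l ⟨h1, h2, h3⟩⟩,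
    fun c' hc' => ?_⟩
  exact Dom.antisymm hc'.1.2.1 hc.1.2.1 (hgreatest c' ⟨hc'.1, hc'.2.1, hc'.2.2.1⟩)
    (hc'.2.2.2 c hc.1 hc.2.1 hc.2.2)
end

section
/- Let n ≥ 1 and let d ∈ P^sp_C(2n) = P_{1,0}(2n). Then f_CB(d) := (d⁺)_B belongs to P^sp_B(2n+1) = P_{0,1}(2n+1). -/
/-!
Let `s` be an even part of `e`. Since `e` is sorted, `e = A ++ [s, …, s] ++ C` with `A` the
parts `> s` and `C` the parts `< s`. Suppose `h_e(s) = |A| + mult_e(s)` is even. As `e ∈ P_0`,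
`mult_e(s)` is even, so `|A|` is even, and `A.sum ≡ |A|` because the even parts of `A` come in
pairs: every partial sum of `e` ending inside the `s`-block is even. If such a partial sum of `e`
equalled that of `d⁺`, dominance would force `d⁺` to have the entry `s` at the two positions
around it; as `d ∈ P_1`, the corresponding partial sum of `d` is then even and that of `d⁺` odd.
So `e ≺ d⁺` strictly inside the block, and moving one box from the last row of the block to its
first row gives an element of `P_0` still dominated by `d⁺` but not by `e`, contradicting
maximality. For `s = 0`, `h_e(0)` is the number of parts, odd since `e` has odd sum and its even
parts come in pairs.
-/

lemma PEps.filter {r : ℕ} {l : List ℕ} (h : PEps r l) (p : ℕ → Bool) :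
    PEps r (l.filter p) := by
  intro v hv hvr
  rw [List.count_filter (List.of_mem_filter hv)]
  exact h v (List.mem_of_mem_filter hv) hvr

lemma PEps.even_sum {l : List ℕ} (h : PEps 1 l) : Even l.sum := by
  rw [← Multiset.sum_coe, Finset.sum_multiset_count]
  refine Finset.even_sum _ fun v hv => ?_
  rcases Nat.even_or_odd v with hv2 | hv2
  · simpa using hv2.mul_left _
  · have := h v (by simpa using hv) (Nat.odd_iff.1 hv2)
    simpa using this.mul_right v

lemma PEps.even_sum_add_length {l : List ℕ} (h : PEps 0 l) : Even (l.sum + l.length) := by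
  have key : l.sum + l.length =
      ∑ v ∈ (l : Multiset ℕ).toFinset, (l : Multiset ℕ).count v * (v + 1) := by
    rw [← Multiset.sum_coe, Finset.sum_multiset_count, ← Multiset.coe_card,
      ← Multiset.toFinset_sum_count_eq, ← Finset.sum_add_distrib]
    simp [mul_add]
  rw [key]
  refine Finset.even_sum _ fun v hv => ?_
  rcases Nat.even_or_odd v with hv2 | hv2
  · have := h v (by simpa using hv) (Nat.even_iff.1 hv2)
    simpa using this.mul_right (v + 1)
  · exact (hv2.add_one).mul_left _

lemma height_eq_height_succ_add_count (l : List ℕ) (s : ℕ) :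
    height l s = height l (s + 1) + l.count s := by
  induction l with
  | nil => simp [height]
  | cons a l ih =>
    simp only [height, List.filter_cons, List.count_cons] at ih ⊢
    split_ifs <;> simp_all <;> omega

lemma filter_append_replicate_append {l : List ℕ} (hl : l.Pairwise (· ≥ ·)) (s : ℕ) :
    l.filter (s + 1 ≤ ·) ++ List.replicate (l.count s) s ++ l.filter (· < s) = l := by
  induction l with
  | nil => simp
  | cons a l ih =>
    obtain ⟨ha, hl⟩ := List.pairwise_cons.1 hl
    rcases lt_trichotomy a s with h | rfl | h
    · have h1 : l.filter (s + 1 ≤ ·) = [] := List.filter_eq_nil_iff.2 fun b hb => by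
        have := ha b hb; simp; omega
      have h2 : l.filter (· < s) = l := List.filter_eq_self.2 fun b hb => by
        have := ha b hb; simp; omega
      have h3 : l.count s = 0 := List.count_eq_zero.2 fun hb => by have := ha s hb; omega
      rw [List.filter_cons_of_neg (by simp; omega), List.filter_cons_of_pos (by simpa),
        List.count_cons_of_ne h.ne, h1, h2, h3]
      rfl
    · have h1 : l.filter (a + 1 ≤ ·) = [] := List.filter_eq_nil_iff.2 fun b hb => by
        have := ha b hb; simp; omega
      rw [h1] at ih
      rw [List.filter_cons_of_neg (by simp), List.filter_cons_of_neg (by simp), h1,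
        List.count_cons_self, List.replicate_succ]
      conv_rhs => rw [← ih hl]
      rfl
    · rw [List.filter_cons_of_pos (by simp; omega), List.filter_cons_of_neg (by simp; omega),
        List.count_cons_of_ne h.ne', List.cons_append, List.cons_append, ih hl]

section Block

variable {l : List ℕ} (hl : l.Pairwise (· ≥ ·)) {s k : ℕ}
include hl

lemma sum_take_of_height_succ_le_of_le_height (h1 : height l (s + 1) ≤ k)
    (h2 : k ≤ height l s) :
    (l.take k).sum = (l.filter (s + 1 ≤ ·)).sum + (k - height l (s + 1)) * s := by
  have hc := height_eq_height_succ_add_count l s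
  have hdec := filter_append_replicate_append hl s
  set A := l.filter (s + 1 ≤ ·)
  have hA : A.length = height l (s + 1) := rfl
  conv_lhs => rw [← hdec]
  rw [List.append_assoc, List.take_append, List.take_append, List.take_of_length_le (by omega),
    List.take_replicate, List.length_replicate, hA,
    show k - height l (s + 1) - l.count s = 0 by omega, min_eq_left (by omega)]
  simp [List.sum_replicate]

lemma getD_of_height_succ_le_of_lt_height (h1 : height l (s + 1) ≤ k) (h2 : k < height l s) :
    l.getD k 0 = s := by
  have hc := height_eq_height_succ_add_count l s
  have hdec := filter_append_replicate_append hl s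
  set A := l.filter (s + 1 ≤ ·)
  have hA : A.length = height l (s + 1) := rfl
  rw [← hdec, List.getD_append _ _ _ _ (by simp; omega),
    List.getD_append_right _ _ _ _ (by omega), hA, List.getD_replicate _ (by omega)]

lemma height_succ_le_and_lt_height_of_getD (hs : 0 < s) (h : l.getD k 0 = s) :
    height l (s + 1) ≤ k ∧ k < height l s := by
  have hc := height_eq_height_succ_add_count l s
  have hdec := filter_append_replicate_append hl s
  set A := l.filter (s + 1 ≤ ·)
  have hA : A.length = height l (s + 1) := rfl
  rw [← hdec] at h
  constructor
  · by_contra! hk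
    rw [List.getD_append _ _ _ _ (by simp; omega), List.getD_append _ _ _ _ (by omega),
      List.getD_eq_getElem _ _ (by omega)] at h
    have := List.of_mem_filter (h ▸ List.getElem_mem (l := A) (by omega))
    simp at this
  · by_contra! hk
    set C := l.filter (· < s)
    rw [List.getD_append_right _ _ _ _ (by simp; omega)] at h
    rcases lt_or_ge (k - (A ++ List.replicate (l.count s) s).length) C.length with hC | hC
    · rw [List.getD_eq_getElem _ _ hC] at h
      have := List.of_mem_filter (h ▸ List.getElem_mem hC)
      simp at this
    · rw [List.getD_eq_default _ _ hC] at h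
      omega

end Block

lemma sum_take_succ_eq_add_getD (l : List ℕ) (j : ℕ) :
    (l.take (j + 1)).sum = (l.take j).sum + l.getD j 0 := by
  rw [List.take_add_one, List.sum_append, List.getD_eq_getElem?_getD]
  cases l[j]? <;> simp

lemma getD_succ_le_getD {l : List ℕ} (hl : l.Pairwise (· ≥ ·)) (j : ℕ) :
    l.getD (j + 1) 0 ≤ l.getD j 0 := by
  rcases lt_or_ge (j + 1) l.length with h | h
  · rw [List.getD_eq_getElem _ _ h, List.getD_eq_getElem _ _ (by omega)]
    exact List.pairwise_iff_getElem.1 hl j (j + 1) _ _ (by omega)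
  · rw [List.getD_eq_default _ _ h]
    exact Nat.zero_le _

lemma getD_eq_of_dom_of_sum_take_eq {e f : List ℕ} (hf : f.Pairwise (· ≥ ·)) (hdom : Dom e f)
    {j s : ℕ} (heq : (e.take (j + 1)).sum = (f.take (j + 1)).sum)
    (hj : e.getD j 0 = s) (hj1 : e.getD (j + 1) 0 = s) :
    f.getD j 0 = s ∧ f.getD (j + 1) 0 = s := by
  have hnext := hdom (j + 1 + 1)
  have hprev := hdom j
  rw [sum_take_succ_eq_add_getD e, sum_take_succ_eq_add_getD f, hj1] at hnext
  have hlast := heq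
  rw [sum_take_succ_eq_add_getD e, sum_take_succ_eq_add_getD f, hj] at hlast
  have := getD_succ_le_getD hf j
  omega

lemma sum_take_append_cons_succ (L C : List ℕ) (y j : ℕ) :
    ((L ++ (y + 1) :: C).take j).sum =
      ((L ++ y :: C).take j).sum + if L.length < j then 1 else 0 := by
  induction L generalizing j with
  | nil => cases j <;> simp [add_right_comm]
  | cons a L ih => cases j <;> simp [ih, add_assoc]

lemma pairwise_dplus {l : List ℕ} (hl : l.Pairwise (· ≥ ·)) :
    (dplus l).Pairwise (· ≥ ·) := by
  cases l with
  | nil => exact List.Pairwise.nil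
  | cons a l =>
    obtain ⟨ha, hl⟩ := List.pairwise_cons.1 hl
    exact List.pairwise_cons.2 ⟨fun b hb => (ha b hb).trans (Nat.le_succ a), hl⟩

lemma sum_take_succ_dplus (a : ℕ) (l : List ℕ) (j : ℕ) :
    ((dplus (a :: l)).take (j + 1)).sum = ((a :: l).take (j + 1)).sum + 1 := by
  simp only [dplus, List.take_succ_cons, List.sum_cons]
  omega

lemma odd_sum_take_dplus {d : List ℕ} (hd : d.Pairwise (· ≥ ·)) (hd1 : PEps 1 d) {s j : ℕ}
    (hs : Even s) (hs0 : 0 < s) (hj : (dplus d).getD j 0 = s)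
    (hj1 : (dplus d).getD (j + 1) 0 = s) : Odd ((dplus d).take (j + 1)).sum := by
  cases d with
  | nil => simp [dplus] at hj; omega
  | cons a l =>
    cases j with
    | zero =>
      have := getD_succ_le_getD hd 0
      simp only [dplus, List.getD_cons_zero, List.getD_cons_succ] at hj hj1 this
      omega
    | succ k =>
      change (a :: l).getD (k + 1) 0 = s at hj
      obtain ⟨h1, h2⟩ := height_succ_le_and_lt_height_of_getD hd hs0 hj
      rw [sum_take_succ_dplus,
        sum_take_of_height_succ_le_of_le_height hd (s := s) (by omega) (by omega)]
      have hA := (hd1.filter (s + 1 ≤ ·)).even_sum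
      exact (hA.add ((hs.mul_left _))).add_one

lemma sum_take_lt_sum_take_dplus {d e : List ℕ} (hd : d.Pairwise (· ≥ ·)) (hd1 : PEps 1 d)
    (he : e.Pairwise (· ≥ ·)) (he0 : PEps 0 e) (hdom : Dom e (dplus d)) {s j : ℕ}
    (hs : Even s) (hs0 : 0 < s) (ha : Even (height e (s + 1)))
    (hj1 : height e (s + 1) ≤ j) (hj2 : j + 2 ≤ height e s) :
    (e.take (j + 1)).sum < ((dplus d).take (j + 1)).sum := by
  refine lt_of_le_of_ne (hdom _) fun heq => ?_
  obtain ⟨hf, hf1⟩ := getD_eq_of_dom_of_sum_take_eq (pairwise_dplus hd) hdom heq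
    (getD_of_height_succ_le_of_lt_height he hj1 (by omega))
    (getD_of_height_succ_le_of_lt_height he (by omega) (by omega))
  have hodd := odd_sum_take_dplus hd hd1 hs hs0 hf hf1
  have heven : Even (e.take (j + 1)).sum := by
    rw [sum_take_of_height_succ_le_of_le_height he (s := s) (by omega) (by omega)]
    have hA := (he0.filter (s + 1 ≤ ·)).even_sum_add_length
    exact ((Nat.even_add.1 hA).2 ha).add (hs.mul_left _)
  rw [heq] at heven
  exact Nat.not_even_iff_odd.2 hodd heven

/-- `A ++ [s, s, …, s, s] ++ C ↦ A ++ [s + 1, s, …, s, s - 1] ++ C` on the block of parts `s`;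
only meaningful when `0 < s` and `s` occurs at least twice. -/
def spreadBlock (l : List ℕ) (s : ℕ) : List ℕ :=
  l.filter (s + 1 ≤ ·) ++
    (s + 1) :: (List.replicate (l.count s - 2) s ++ (s - 1) :: l.filter (· < s))

section SpreadBlock

variable {l : List ℕ} {s : ℕ}

lemma pairwise_spreadBlock (hl : l.Pairwise (· ≥ ·)) :
    (spreadBlock l s).Pairwise (· ≥ ·) := by
  have hA : ∀ a ∈ l.filter (s + 1 ≤ ·), s + 1 ≤ a := fun a ha => by
    simpa using List.of_mem_filter ha
  have hC : ∀ c ∈ l.filter (· < s), c < s := fun c hc => by simpa using List.of_mem_filter hc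
  have := hl.filter (s + 1 ≤ ·)
  have := hl.filter (· < s)
  simp only [spreadBlock, List.pairwise_append, List.pairwise_cons, List.mem_append, List.mem_cons,
    List.mem_replicate, List.pairwise_replicate]
  grind

lemma pos_of_mem_spreadBlock (hl : ∀ p ∈ l, 0 < p) (hs : 1 < s) :
    ∀ p ∈ spreadBlock l s, 0 < p := by
  intro p hp
  simp only [spreadBlock, List.mem_append, List.mem_cons, List.mem_replicate] at hp
  rcases hp with hp | rfl | ⟨-, rfl⟩ | rfl | hp
  · exact hl p (List.mem_of_mem_filter hp)
  · omega
  · omega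
  · omega
  · exact hl p (List.mem_of_mem_filter hp)

variable (hl : l.Pairwise (· ≥ ·)) (hc : 2 ≤ l.count s)
include hl hc

lemma eq_filter_append_cons_replicate :
    l = l.filter (s + 1 ≤ ·) ++
      s :: (List.replicate (l.count s - 2) s ++ s :: l.filter (· < s)) := by
  conv_lhs => rw [← filter_append_replicate_append hl s]
  obtain ⟨m, hm⟩ : ∃ m, l.count s = m + 2 := ⟨l.count s - 2, by omega⟩
  rw [hm, List.replicate_succ, List.replicate_succ']
  simp

lemma count_spreadBlock (hs0 : 0 < s) {v : ℕ} (hv : v % 2 = s % 2) :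
    (spreadBlock l s).count v + (if v = s then 2 else 0) = l.count v := by
  rw [spreadBlock, congrArg (List.count v) (eq_filter_append_cons_replicate hl hc)]
  simp only [List.count_append, List.count_cons, List.count_replicate, beq_iff_eq]
  split_ifs <;> omega

-- The partial sums of `spreadBlock l s` exceed those of `l` by one exactly strictly inside the
-- block of parts `s`, i.e. for `height l (s + 1) < j < height l s`.
lemma sum_take_spreadBlock (hs0 : 0 < s) (j : ℕ) :
    ((spreadBlock l s).take j).sum + (if height l s ≤ j then 1 else 0) =
      (l.take j).sum + if height l (s + 1) < j then 1 else 0 := by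
  have hb := height_eq_height_succ_add_count l s
  have hA : (l.filter (s + 1 ≤ ·)).length = height l (s + 1) := rfl
  set A := l.filter (s + 1 ≤ ·)
  set L := List.replicate (l.count s - 2) s
  set C := l.filter (· < s)
  have hl' : l = (A ++ s :: L) ++ (s - 1 + 1) :: C := by
    rw [List.append_assoc, List.cons_append, Nat.sub_add_cancel hs0]
    exact eq_filter_append_cons_replicate hl hc
  have hM : spreadBlock l s = A ++ (s + 1) :: (L ++ (s - 1) :: C) := rfl
  have hX : A ++ s :: (L ++ (s - 1) :: C) = (A ++ s :: L) ++ (s - 1) :: C := by simp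
  rw [hM, sum_take_append_cons_succ, hX, congrArg (List.take j) hl', sum_take_append_cons_succ]
  simp only [List.length_append, List.length_cons, List.length_replicate, hA, L]
  split_ifs <;> omega

lemma sum_spreadBlock (hs0 : 0 < s) : (spreadBlock l s).sum = l.sum := by
  set j := (spreadBlock l s).length + l.length + 1
  have key := sum_take_spreadBlock hl hc hs0 j
  have h1 : height l s ≤ l.length := List.length_filter_le _ _
  have h2 : height l (s + 1) ≤ l.length := List.length_filter_le _ _
  rw [List.take_of_length_le (by omega), List.take_of_length_le (by omega)] at key
  rw [if_pos (show height l s ≤ j by omega), if_pos (show height l (s + 1) < j by omega)] at key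
  omega

lemma not_dom_spreadBlock (hs0 : 0 < s) : ¬ Dom (spreadBlock l s) l := fun h => by
  have key := sum_take_spreadBlock hl hc hs0 (height l (s + 1) + 1)
  have hb := height_eq_height_succ_add_count l s
  have := h (height l (s + 1) + 1)
  split_ifs at key <;> omega

end SpreadBlock

lemma PEps.spreadBlock {l : List ℕ} {s : ℕ} (hl0 : PEps 0 l) (hl : l.Pairwise (· ≥ ·))
    (hc : 2 ≤ l.count s) (hs : Even s) (hs0 : 0 < s) : PEps 0 (spreadBlock l s) := by
  intro v hv hv2
  have key := count_spreadBlock hl hc hs0 (v := v) (by rw [Nat.even_iff.1 hs]; exact hv2)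
  have hv0 := List.count_pos_iff.2 hv
  by_cases hvs : v = s
  · subst hvs
    rw [if_pos rfl] at key
    have hls : Even (l.count v) := hl0 v (List.count_pos_iff.1 (by omega)) hv2
    exact (Nat.even_add.1 (key ▸ hls)).2 even_two
  · rw [if_neg hvs, add_zero] at key
    rw [key]
    exact hl0 v (List.count_pos_iff.1 (by omega)) hv2

lemma dom_spreadBlock_dplus {d e : List ℕ} (hd : d.Pairwise (· ≥ ·)) (hd1 : PEps 1 d)
    (he : e.Pairwise (· ≥ ·)) (he0 : PEps 0 e) (hdom : Dom e (dplus d)) {s : ℕ}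
    (hs : Even s) (hs0 : 0 < s) (hc : 2 ≤ e.count s) (hb : Even (height e s)) :
    Dom (spreadBlock e s) (dplus d) := by
  have ha : Even (height e (s + 1)) := by
    have hcs : Even (e.count s) := he0 s (List.count_pos_iff.1 (by omega)) (Nat.even_iff.1 hs)
    rw [height_eq_height_succ_add_count] at hb
    exact (Nat.even_add.1 hb).2 hcs
  intro j
  have key := sum_take_spreadBlock he hc hs0 j
  by_cases hj : height e (s + 1) < j ∧ j < height e s
  · obtain ⟨i, rfl⟩ : ∃ i, j = i + 1 := ⟨j - 1, by omega⟩
    have := sum_take_lt_sum_take_dplus hd hd1 he he0 hdom hs hs0 ha (j := i) (by omega) (by omega)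
    rw [if_neg (by omega), if_pos (by omega)] at key
    omega
  · have := hdom j
    split_ifs at key <;> omega

theorem fCB_mem_general (n : ℕ) (d : List ℕ)
    (hd : IsPartition (2 * n) d) (hdC : PEpsEps 1 0 d)
    (e : List ℕ) (he : IsCollapse 0 (2 * n + 1) (dplus d) e) :
    PEpsEps 0 1 e := by
  obtain ⟨⟨he, hpos, hsum⟩, he0, hdom, hmax⟩ := he
  refine ⟨he0, fun s hs hs0 => ?_⟩
  rcases hs0 with rfl | hse
  · have hlen : height e 0 = e.length := by simp [height]
    have := he0.even_sum_add_length
    rw [hsum, Nat.even_iff] at this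
    omega
  · by_contra hb
    have hs2 : Even s := Nat.even_iff.2 hs
    have hs0 : 0 < s := hpos s hse
    have hc : 2 ≤ e.count s := by
      obtain ⟨k, hk⟩ := he0 s hse hs
      have := List.count_pos_iff.2 hse
      omega
    exact not_dom_spreadBlock he hc hs0 (hmax _
      ⟨pairwise_spreadBlock he, pos_of_mem_spreadBlock hpos (by omega),
        by rw [sum_spreadBlock he hc hs0, hsum]⟩
      (he0.spreadBlock he hc hs2 hs0)
      (dom_spreadBlock_dplus hd.1 hdC.1 he he0 hdom hs2 hs0 hc (Nat.even_iff.2 (by omega))))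

/-- If `d ∈ P^sp_C(2n) = P_{1,0}(2n)` then `f_CB(d) = (d⁺)_B` lies in
`P^sp_B(2n+1) = P_{0,1}(2n+1)`. -/
theorem fCB_mem (n : ℕ) (hn : 1 ≤ n) (d : List ℕ)
    (hd : IsPartition (2 * n) d) (hdC : PEpsEps 1 0 d)
    (e : List ℕ) (he : IsCollapse 0 (2 * n + 1) (dplus d) e) :
    PEpsEps 0 1 e :=
  fCB_mem_general n d hd hdC e he
end

section
/- The map f_BC : P^sp_B(2n+1) → P^sp_C(2n), d ↦ (d⁻)_C, is order-preserving: if d, d' ∈ P^sp_B(2n+1) satisfy d ⪯ d' in the dominance order, then f_BC(d) ⪯ f_BC(d'). -/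
theorem List.sum_take_le_sum (l : List ℕ) (j : ℕ) : (l.take j).sum ≤ l.sum :=
  (l.take_sublist j).sum_le_sum fun _ _ => Nat.zero_le _

theorem sum_take_dminus {l : List ℕ} (hl : ∀ p ∈ l, 0 < p) (j : ℕ) :
    ((dminus l).take j).sum = min (l.take j).sum (l.sum - 1) := by
  rcases l.eq_nil_or_concat' with rfl | ⟨L, a, rfl⟩
  · simp [dminus]
  have ha : 0 < a := hl a (by simp)
  have hdminus : dminus (L ++ [a]) = L ++ [a - 1].filter (0 < ·) := by
    simpa [dminus] using fun p hp => hl p (by simp [hp])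
  rw [hdminus]
  rcases le_or_gt j L.length with hj | hj
  · have := L.sum_take_le_sum j
    simp only [List.take_append_of_le_length hj, List.sum_append, List.sum_singleton]
    omega
  · have hlast : ([a - 1].filter (0 < ·)).sum = a - 1 := by
      by_cases h : 0 < a - 1 <;> simp [h]; omega
    have hlen := List.length_filter_le (0 < ·) [a - 1]
    rw [List.take_of_length_le (by simp at hlen ⊢; omega),
      List.take_of_length_le (by simp; omega)]
    simp only [List.sum_append, hlast, List.sum_singleton]
    omega

theorem Dom.trans {p q r : List ℕ} (hpq : Dom p q) (hqr : Dom q r) : Dom p r :=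
  fun j => (hpq j).trans (hqr j)

theorem Dom.sum_le {p q : List ℕ} (h : Dom p q) : p.sum ≤ q.sum := by
  simpa using (h p.length).trans (q.sum_take_le_sum _)

theorem Dom.dminus {d d' : List ℕ} (hd : ∀ p ∈ d, 0 < p) (hd' : ∀ p ∈ d', 0 < p)
    (h : Dom d d') : Dom (dminus d) (dminus d') := fun j => by
  rw [sum_take_dminus hd, sum_take_dminus hd']
  exact min_le_min (h j) (Nat.sub_le_sub_right h.sum_le 1)

theorem IsCollapse.dom_of_dom {e N : ℕ} {l l' c c' : List ℕ} (hc : IsCollapse e N l c)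
    (hc' : IsCollapse e N l' c') (h : Dom l l') : Dom c c' :=
  hc'.2.2.2 c hc.1 hc.2.1 (hc.2.2.1.trans h)

theorem fBC_monotone_general (n : ℕ) (d d' : List ℕ)
    (hd : IsPartition (2 * n + 1) d) (hd' : IsPartition (2 * n + 1) d')
    (hdom : Dom d d')
    (e e' : List ℕ)
    (he : IsCollapse 1 (2 * n) (dminus d) e)
    (he' : IsCollapse 1 (2 * n) (dminus d') e') :
    Dom e e' :=
  he.dom_of_dom he' (hdom.dminus hd.2.1 hd'.2.1)

/-- The map `f_BC : P^sp_B(2n+1) → P^sp_C(2n)`, `d ↦ (d⁻)_C`, is order-preserving for the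
dominance order. -/
theorem fBC_monotone (n : ℕ) (d d' : List ℕ)
    (hd : IsPartition (2 * n + 1) d) (hd' : IsPartition (2 * n + 1) d')
    (hdB : PEpsEps 0 1 d) (hd'B : PEpsEps 0 1 d')
    (hdom : Dom d d')
    (e e' : List ℕ)
    (he : IsCollapse 1 (2 * n) (dminus d) e)
    (he' : IsCollapse 1 (2 * n) (dminus d') e') :
    Dom e e' :=
  fBC_monotone_general n d d' hd hd' hdom e e' he he'
end
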